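/- arXiv:0807.2153 — 6 statements merged into one kernel-verified Lean document; each statement's English description precedes it below -/
import Mathlib

section
/- Let γ > 0, and let g, p : ℝ^d → [0,∞) be measurable functions with ∫_{ℝ^d} g(x) dx ≤ 1 and ∫_{ℝ^d} p(x) dx = 1. Set A = {x ∈ ℝ^d : g(x) ≥ γ} and assume p(x) > 0 for Lebesgue-almost every x ∈ A. Then ∫_A |log g(x) − log p(x)| · p(x) dx ≤ (2/γ) · sup_{x∈ℝ^d} |g(x) − p(x)|; in particular |∫_A (log g(x) − log p(x)) p(x) dx| ≤ (2/γ) · sup_{x∈ℝ^d} |g(x) − p(x)|. -/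
open MeasureTheory

/-! From `log x ≤ x - 1` one gets `(log a - log b) * b ≤ a - b` for positive `a, b`; applied in
both orders and combined with `g ≥ γ` on `A`, this bounds the integrand on `A` pointwise by
`(sup |g - p| / γ) * (g + p)`, and `g + p` has total mass at most `2`. -/

namespace Real

lemma log_sub_log_mul_le_sub {x y : ℝ} (hx : 0 < x) (hy : 0 < y) :
    (log x - log y) * y ≤ x - y := by
  have h := log_le_sub_one_of_pos (div_pos hx hy)
  rw [log_div hx.ne' hy.ne'] at h
  calc (log x - log y) * y ≤ (x / y - 1) * y := by gcongr
    _ = x - y := by field_simp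

lemma abs_log_sub_log_mul_le {γ a b : ℝ} (hγ : 0 < γ) (ha : γ ≤ a) (hb : 0 ≤ b) :
    |log a - log b| * b ≤ |a - b| / γ * (a + b) := by
  have ha0 : 0 < a := hγ.trans_le ha
  rcases hb.eq_or_lt with rfl | hb0
  · simp only [mul_zero]; positivity
  rcases le_total b a with hba | hab
  · have hab1 : 1 ≤ (a + b) / γ := by rw [le_div_iff₀ hγ]; linarith
    calc |log a - log b| * b = (log a - log b) * b := by
          rw [abs_of_nonneg (sub_nonneg.2 (log_le_log hb0 hba))]
      _ ≤ |a - b| := (log_sub_log_mul_le_sub ha0 hb0).trans (le_abs_self _)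
      _ ≤ |a - b| / γ * (a + b) := by
          rw [div_mul_eq_mul_div, mul_div_assoc]; exact le_mul_of_one_le_right (abs_nonneg _) hab1
  · have hlog : log b - log a ≤ (b - a) / a := by
      rw [le_div_iff₀ ha0]; exact log_sub_log_mul_le_sub hb0 ha0
    calc |log a - log b| * b = (log b - log a) * b := by
          rw [abs_sub_comm, abs_of_nonneg (sub_nonneg.2 (log_le_log ha0 hab))]
      _ ≤ (b - a) / a * b := by gcongr
      _ ≤ |a - b| / γ * (a + b) := by
          rw [abs_sub_comm, abs_of_nonneg (sub_nonneg.2 hab)]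
          gcongr
          linarith

end Real

open Real

theorem statement0_general (d : ℕ) (γ : ℝ) (hγ : 0 < γ)
    (g p : (Fin d → ℝ) → ℝ)
    (hg_nonneg : ∀ x, 0 ≤ g x) (hp_nonneg : ∀ x, 0 ≤ p x)
    (hg_int : Integrable g) (hp_int : Integrable p)
    (hg_le : ∫ x, g x ≤ 1) (hp_one : ∫ x, p x = 1)
    (hbdd : BddAbove (Set.range fun x => |g x - p x|)) :
    (∫ x in {x | γ ≤ g x}, |Real.log (g x) - Real.log (p x)| * p x)
      ≤ (2 / γ) * ⨆ x, |g x - p x| ∧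
    |∫ x in {x | γ ≤ g x}, (Real.log (g x) - Real.log (p x)) * p x|
      ≤ (2 / γ) * ⨆ x, |g x - p x| := by
  set A := {x | γ ≤ g x}
  set M := ⨆ x, |g x - p x|
  have hM : ∀ x, |g x - p x| ≤ M := le_ciSup hbdd
  have hA : NullMeasurableSet A :=
    nullMeasurableSet_le aemeasurable_const hg_int.aemeasurable
  have hbound : ∫ x in A, |log (g x) - log (p x)| * p x ≤ 2 / γ * M :=
    calc ∫ x in A, |log (g x) - log (p x)| * p x
        ≤ ∫ x in A, M / γ * (g x + p x) := by
          refine integral_mono_of_nonneg (ae_of_all _ fun x ↦ by positivity [hp_nonneg x])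
            ((hg_int.add hp_int).const_mul _).restrict ?_
          filter_upwards [ae_restrict_mem₀ hA] with x hx
          grw [abs_log_sub_log_mul_le hγ hx (hp_nonneg x), hM x]
          exact add_nonneg (hg_nonneg x) (hp_nonneg x)
      _ = M / γ * ((∫ x in A, g x) + ∫ x in A, p x) := by
          rw [integral_const_mul, integral_add hg_int.restrict hp_int.restrict]
      _ ≤ M / γ * (1 + 1) := by
          have hM0 : 0 ≤ M := (abs_nonneg _).trans (hM 0)
          gcongr
          · exact (setIntegral_le_integral hg_int (ae_of_all _ hg_nonneg)).trans hg_le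
          · exact (setIntegral_le_integral hp_int (ae_of_all _ hp_nonneg)).trans hp_one.le
      _ = 2 / γ * M := by ring
  refine ⟨hbound, le_trans ?_ hbound⟩
  calc |∫ x in A, (log (g x) - log (p x)) * p x|
      ≤ ∫ x in A, |(log (g x) - log (p x)) * p x| := abs_integral_le_integral_abs
    _ = ∫ x in A, |log (g x) - log (p x)| * p x := by
        simp_rw [abs_mul, abs_of_nonneg (hp_nonneg _)]

/-- Let `γ > 0` and let `g, p : ℝ^d → [0,∞)` be measurable with
`∫ g ≤ 1` and `∫ p = 1`. Set `A = {x | g x ≥ γ}` and assume `p > 0` Lebesgue-a.e. on `A`.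
Then `∫_A |log g − log p| · p ≤ (2/γ) · sup_x |g x − p x|` and in particular
`|∫_A (log g − log p) · p| ≤ (2/γ) · sup_x |g x − p x|`. -/
theorem statement0 (d : ℕ) (γ : ℝ) (hγ : 0 < γ)
    (g p : (Fin d → ℝ) → ℝ)
    (hg_meas : Measurable g) (hp_meas : Measurable p)
    (hg_nonneg : ∀ x, 0 ≤ g x) (hp_nonneg : ∀ x, 0 ≤ p x)
    (hg_int : Integrable g) (hp_int : Integrable p)
    (hg_le : ∫ x, g x ≤ 1) (hp_one : ∫ x, p x = 1)
    (hbdd : BddAbove (Set.range fun x => |g x - p x|))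
    (hpos : ∀ᵐ x ∂(volume.restrict {x | γ ≤ g x}), 0 < p x) :
    (∫ x in {x | γ ≤ g x}, |Real.log (g x) - Real.log (p x)| * p x)
      ≤ (2 / γ) * ⨆ x, |g x - p x| ∧
    |∫ x in {x | γ ≤ g x}, (Real.log (g x) - Real.log (p x)) * p x|
      ≤ (2 / γ) * ⨆ x, |g x - p x| :=
  statement0_general d γ hγ g p hg_nonneg hp_nonneg hg_int hp_int hg_le hp_one hbdd
end

section
/- Let γ > 0, let g : ℝ^d → [0,∞) be measurable with ∫_{ℝ^d} g(x) dx ≤ 1, and let p : ℝ^d → ℝ be measurable with sup_{x∈ℝ^d} |g(x) − p(x)| < ∞. Set A = {x ∈ ℝ^d : g(x) ≥ γ}. Then |∫_A (g(x) − p(x)) log g(x) dx| ≤ (1/γ² + 1) · sup_{x∈ℝ^d} |g(x) − p(x)|. -/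
open MeasureTheory Filter Set

/-! On `{g ≥ γ}` the elementary bound `|log z| ≤ z⁻¹ + z` becomes `|log g| ≤ (1/γ² + 1) g`,
since there `g⁻¹ ≤ g / γ²`. Hence the integrand is dominated by `(1/γ² + 1) ‖g - p‖_∞ g`,
whose integral is at most `(1/γ² + 1) ‖g - p‖_∞` because `∫ g ≤ 1`. -/

lemma Real.abs_log_le_inv_add_self {z : ℝ} (hz : 0 < z) : |Real.log z| ≤ z⁻¹ + z := by
  rcases le_total 1 z with h1 | h1
  · rw [abs_of_nonneg (Real.log_nonneg h1)]
    linarith [Real.log_le_sub_one_of_pos hz, inv_pos.2 hz]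
  · rw [abs_of_nonpos (Real.log_nonpos hz.le h1), ← Real.log_inv]
    linarith [Real.log_le_sub_one_of_pos (inv_pos.2 hz)]

lemma Real.abs_log_le_of_le {γ z : ℝ} (hγ : 0 < γ) (hz : γ ≤ z) :
    |Real.log z| ≤ (1 / γ ^ 2 + 1) * z := by
  have hz0 : 0 < z := hγ.trans_le hz
  have hinv : z⁻¹ ≤ z / γ ^ 2 := by
    rw [inv_le_iff_one_le_mul₀ hz0, div_mul_eq_mul_div, le_div_iff₀ (by positivity)]
    nlinarith
  calc |Real.log z| ≤ z⁻¹ + z := Real.abs_log_le_inv_add_self hz0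
    _ ≤ z / γ ^ 2 + z := by gcongr
    _ = (1 / γ ^ 2 + 1) * z := by ring

lemma abs_setIntegral_mul_le_of_abs_le_mul {α : Type*} [MeasurableSpace α] {μ : Measure α}
    {f h g : α → ℝ} {s : Set α} {C M : ℝ} (hs : MeasurableSet s)
    (hg_int : Integrable g μ) (hg_nonneg : ∀ x, 0 ≤ g x) (hg_le : ∫ x, g x ∂μ ≤ 1)
    (hC : 0 ≤ C) (hM : 0 ≤ M) (hf : ∀ x, |f x| ≤ M) (hh : ∀ x ∈ s, |h x| ≤ C * g x) :
    |∫ x in s, f x * h x ∂μ| ≤ C * M := by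
  have hdom : ∀ᵐ x ∂μ.restrict s, ‖f x * h x‖ ≤ C * M * g x := by
    filter_upwards [ae_restrict_mem hs] with x hx
    rw [Real.norm_eq_abs, abs_mul]
    calc |f x| * |h x| ≤ M * (C * g x) := mul_le_mul (hf x) (hh x hx) (abs_nonneg _) hM
      _ = C * M * g x := by ring
  have hCMg_nonneg : 0 ≤ᵐ[μ] fun x => C * M * g x :=
    ae_of_all _ fun x => mul_nonneg (mul_nonneg hC hM) (hg_nonneg x)
  calc |∫ x in s, f x * h x ∂μ|
      ≤ ∫ x in s, C * M * g x ∂μ := norm_integral_le_of_norm_le (hg_int.const_mul _).restrict hdom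
    _ ≤ ∫ x, C * M * g x ∂μ := setIntegral_le_integral (hg_int.const_mul _) hCMg_nonneg
    _ = C * M * ∫ x, g x ∂μ := integral_const_mul _ _
    _ ≤ C * M := mul_le_of_le_one_right (mul_nonneg hC hM) hg_le

theorem statement1_general (d : ℕ) (γ : ℝ) (hγ : 0 < γ)
    (g p : (Fin d → ℝ) → ℝ)
    (hg_meas : Measurable g)
    (hg_nonneg : ∀ x, 0 ≤ g x)
    (hg_int : Integrable g) (hg_le : ∫ x, g x ≤ 1)
    (hbdd : BddAbove (Set.range fun x => |g x - p x|)) :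
    |∫ x in {x | γ ≤ g x}, (g x - p x) * Real.log (g x)|
      ≤ (1 / γ ^ 2 + 1) * ⨆ x, |g x - p x| :=
  abs_setIntegral_mul_le_of_abs_le_mul (measurableSet_le measurable_const hg_meas)
    hg_int hg_nonneg hg_le (by positivity) (Real.iSup_nonneg fun _ => abs_nonneg _)
    (le_ciSup hbdd) fun _ hx => Real.abs_log_le_of_le hγ hx

/-- Let `γ > 0`, `g : ℝ^d → [0,∞)` measurable with `∫ g ≤ 1`, and
`p : ℝ^d → ℝ` measurable with `sup_x |g x − p x| < ∞`.  With `A = {x | g x ≥ γ}`,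
`|∫_A (g − p) log g| ≤ (1/γ² + 1) · sup_x |g x − p x|`. -/
theorem statement1 (d : ℕ) (γ : ℝ) (hγ : 0 < γ)
    (g p : (Fin d → ℝ) → ℝ)
    (hg_meas : Measurable g) (hp_meas : Measurable p)
    (hg_nonneg : ∀ x, 0 ≤ g x)
    (hg_int : Integrable g) (hg_le : ∫ x, g x ≤ 1)
    (hbdd : BddAbove (Set.range fun x => |g x - p x|)) :
    |∫ x in {x | γ ≤ g x}, (g x - p x) * Real.log (g x)|
      ≤ (1 / γ ^ 2 + 1) * ⨆ x, |g x - p x| :=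
  statement1_general d γ hγ g p hg_meas hg_nonneg hg_int hg_le hbdd
end

section
/- Let K : ℝ^d → [0,∞) be measurable, bounded, with ∫_{ℝ^d} K(t) dt = 1. Then for every n ≥ 1, every bandwidth 0 < h ≤ 1, every γ > 0, and every realization of the sample such that φ_{n,h}(x) > 0 for Lebesgue-almost every x in A_{n,h} = {x : f_{n,h}(x) ≥ γ}, one has |H^{(1)}_{n,h} − ÊH^{(1)}_{n,h}| ≤ (2/γ + 1/γ² + 1) · sup_{x∈ℝ^d} |f_{n,h}(x) − φ_{n,h}(x)|, where H^{(1)}_{n,h} = −∫_{A_{n,h}} f_{n,h} log f_{n,h} dx and ÊH^{(1)}_{n,h} = −∫_{A_{n,h}} φ_{n,h} log φ_{n,h} dx. -/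
open MeasureTheory Filter Set

/-- The Akaike–Parzen–Rosenblatt kernel density estimator
`f_{n,h}(x) = (nh)⁻¹ ∑_{i<n} K((x − X_i)/h^{1/d})` built from sample points `X`. -/
noncomputable def kde (d : ℕ) (K : (Fin d → ℝ) → ℝ) (X : ℕ → Fin d → ℝ)
    (n : ℕ) (h : ℝ) (x : Fin d → ℝ) : ℝ :=
  ((n : ℝ) * h)⁻¹ * ∑ i ∈ Finset.range n, K (fun j => (x j - X i j) / h ^ ((1 : ℝ) / d))

/-- The mean `φ_{n,h}(x) = E[f_{n,h}(x)]` of the kernel density estimator. -/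
noncomputable def kdeMean {Ω : Type*} [MeasurableSpace Ω] (P : Measure Ω)
    (d : ℕ) (K : (Fin d → ℝ) → ℝ) (X : ℕ → Ω → Fin d → ℝ) (n : ℕ) (h : ℝ)
    (x : Fin d → ℝ) : ℝ :=
  ∫ ω, kde d K (fun i => X i ω) n h x ∂P

/-- The plug-in entropy estimator `H^{(1)} = −∫_{{g ≥ γ}} g log g` for `g = f_{n,h}`. -/
noncomputable def entEst1 (d : ℕ) (γ : ℝ) (g : (Fin d → ℝ) → ℝ) : ℝ :=
  -∫ x in {x | γ ≤ g x}, g x * Real.log (g x)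

/-- The centering `ÊH^{(1)} = −∫_{{g ≥ γ}} p log p` with `p = φ_{n,h}`. -/
noncomputable def entEst1Cent (d : ℕ) (γ : ℝ) (g p : (Fin d → ℝ) → ℝ) : ℝ :=
  -∫ x in {x | γ ≤ g x}, p x * Real.log (p x)

/-! Pointwise, for `a ≥ γ` and `b > 0`, convexity of `t ↦ t log t` gives
`a log a − b log b = (a − b)(1 + log a) − R` with `0 ≤ R ≤ (a − b)² / a`, while
`|1 + log a| ≤ a + 1/γ`. With `δ = sup |f_{n,h} − φ_{n,h}|` this bounds the integrand on
`A = {f_{n,h} ≥ γ}` by `δ (f_{n,h} + 1/γ) + (δ/γ)(f_{n,h} + φ_{n,h})`. Integrating over `A`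
and using `∫_A f_{n,h} ≤ 1`, `∫_A φ_{n,h} ≤ 1` (Fubini) and Markov's bound `|A| ≤ 1/γ`
gives `δ (1 + 1/γ²) + 2δ/γ`. -/

lemma abs_mul_log_le_one_add_sq {t : ℝ} (ht : 0 ≤ t) : |t * Real.log t| ≤ 1 + t ^ 2 := by
  rcases ht.eq_or_lt with rfl | ht
  · simp
  have hup : Real.log t ≤ t - 1 := Real.log_le_sub_one_of_pos ht
  have hlow : 1 - t⁻¹ ≤ Real.log t := Real.one_sub_inv_le_log_of_pos ht
  have hlow' : t - 1 ≤ t * Real.log t := by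
    calc t - 1 = t * (1 - t⁻¹) := by field_simp
      _ ≤ t * Real.log t := by gcongr
  rw [abs_le]
  constructor <;> nlinarith

lemma abs_one_add_log_le {a γ : ℝ} (hγ : 0 < γ) (ha : γ ≤ a) :
    |1 + Real.log a| ≤ a + γ⁻¹ := by
  have ha0 : 0 < a := hγ.trans_le ha
  have hup : Real.log a ≤ a - 1 := Real.log_le_sub_one_of_pos ha0
  have hlow : 1 - a⁻¹ ≤ Real.log a := Real.one_sub_inv_le_log_of_pos ha0
  have hinv : a⁻¹ ≤ γ⁻¹ := inv_anti₀ hγ ha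
  rw [abs_le]
  constructor <;> linarith [inv_pos.2 hγ]

lemma abs_mul_log_sub_mul_log_le {a b : ℝ} (ha : 0 < a) (hb : 0 < b) :
    |a * Real.log a - b * Real.log b| ≤ |a - b| * |1 + Real.log a| + (a - b) ^ 2 / a := by
  -- `R` is the remainder of the first-order Taylor expansion of `t log t` at `a`, evaluated at `b`.
  set R := b * (Real.log b - Real.log a) - (b - a)
  have hR_nonneg : 0 ≤ R := by
    have := Real.log_le_sub_one_of_pos (div_pos ha hb)
    rw [Real.log_div ha.ne' hb.ne'] at this
    have : b * (Real.log a - Real.log b) ≤ b * (a / b - 1) := by gcongr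
    have hid : b * (a / b - 1) = a - b := by field_simp
    linarith
  have hR_le : R ≤ (a - b) ^ 2 / a := by
    have := Real.log_le_sub_one_of_pos (div_pos hb ha)
    rw [Real.log_div hb.ne' ha.ne'] at this
    have : b * (Real.log b - Real.log a) ≤ b * (b / a - 1) := by gcongr
    have hid : b * (b / a - 1) - (b - a) = (a - b) ^ 2 / a := by field_simp; ring
    linarith
  calc |a * Real.log a - b * Real.log b| = |(a - b) * (1 + Real.log a) - R| := by
        congr 1; ring
    _ ≤ |(a - b) * (1 + Real.log a)| + |R| := abs_sub _ _
    _ ≤ |a - b| * |1 + Real.log a| + (a - b) ^ 2 / a := by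
        rw [abs_mul, abs_of_nonneg hR_nonneg]
        gcongr

lemma abs_mul_log_sub_mul_log_le_of_le {a b γ δ : ℝ} (hγ : 0 < γ) (ha : γ ≤ a) (hb : 0 < b)
    (hab : |a - b| ≤ δ) :
    |a * Real.log a - b * Real.log b| ≤ δ * (a + γ⁻¹) + δ * γ⁻¹ * (a + b) := by
  have ha0 : 0 < a := hγ.trans_le ha
  have hδ : 0 ≤ δ := (abs_nonneg _).trans hab
  have hsum : |a - b| ≤ a + b := by rw [abs_le]; constructor <;> linarith
  have hquad : (a - b) ^ 2 / a ≤ δ * γ⁻¹ * (a + b) := by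
    calc (a - b) ^ 2 / a = |a - b| * |a - b| * a⁻¹ := by
          rw [abs_mul_abs_self, sq, div_eq_mul_inv]
      _ ≤ δ * (a + b) * γ⁻¹ := by gcongr
      _ = δ * γ⁻¹ * (a + b) := by ring
  calc |a * Real.log a - b * Real.log b| ≤ |a - b| * |1 + Real.log a| + (a - b) ^ 2 / a :=
        abs_mul_log_sub_mul_log_le ha0 hb
    _ ≤ δ * (a + γ⁻¹) + δ * γ⁻¹ * (a + b) := by
        gcongr
        exact abs_one_add_log_le hγ ha

section SetIntegral

variable {α : Type*} [MeasurableSpace α] {μ : Measure α} {g p : α → ℝ} {γ δ M : ℝ}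

lemma integrableOn_mul_log_of_ae_mem_Icc {s : Set α} (hs : μ s ≠ ⊤)
    (hp : AEStronglyMeasurable p μ) (hpM : ∀ᵐ x ∂μ.restrict s, p x ∈ Icc 0 M) :
    IntegrableOn (fun x => p x * Real.log (p x)) s μ := by
  refine Measure.integrableOn_of_bounded hs
    (hp.mul (Real.measurable_log.comp_aemeasurable hp.aemeasurable).aestronglyMeasurable)
    (M := 1 + M ^ 2) ?_
  filter_upwards [hpM] with x ⟨hx0, hxM⟩
  have : p x ^ 2 ≤ M ^ 2 := pow_le_pow_left₀ hx0 hxM 2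
  rw [Real.norm_eq_abs]
  linarith [abs_mul_log_le_one_add_sq hx0]

theorem abs_setIntegral_mul_log_sub_le (hγ : 0 < γ) (hδ : 0 ≤ δ) (hg_meas : Measurable g)
    (hp_meas : AEStronglyMeasurable p μ) (hg_nonneg : 0 ≤ g) (hgM : ∀ x, g x ≤ M)
    (hg_int : Integrable g μ) (hg_one : ∫ x, g x ∂μ = 1)
    (hp_le : ∫ x in {x | γ ≤ g x}, p x ∂μ ≤ 1) (hdist : ∀ x, |g x - p x| ≤ δ)
    (hpos : ∀ᵐ x ∂μ.restrict {x | γ ≤ g x}, 0 < p x) :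
    |(∫ x in {x | γ ≤ g x}, g x * Real.log (g x) ∂μ) -
        ∫ x in {x | γ ≤ g x}, p x * Real.log (p x) ∂μ|
      ≤ (2 / γ + 1 / γ ^ 2 + 1) * δ := by
  set A := {x | γ ≤ g x}
  have hA : MeasurableSet A := hg_meas measurableSet_Ici
  have hμA : γ * μ.real A ≤ 1 :=
    hg_one ▸ mul_meas_ge_le_integral_of_nonneg (.of_forall hg_nonneg) hg_int γ
  have hμA_fin : μ A ≠ ⊤ := (hg_int.measure_ge_lt_top hγ).ne
  have hmemA : ∀ᵐ x ∂μ.restrict A, γ ≤ g x := ae_restrict_mem hA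
  have hp_range : ∀ᵐ x ∂μ.restrict A, p x ∈ Icc 0 (M + δ) := by
    filter_upwards [hpos] with x hx
    exact ⟨hx.le, by linarith [hgM x, (abs_le.1 (hdist x)).1]⟩
  have hg_intA : IntegrableOn g A μ := hg_int.integrableOn
  have hp_intA : IntegrableOn p A μ := by
    refine Measure.integrableOn_of_bounded hμA_fin hp_meas (M := M + δ) ?_
    filter_upwards [hp_range] with x hx using (Real.norm_of_nonneg hx.1).trans_le hx.2
  have hgl_intA : IntegrableOn (fun x => g x * Real.log (g x)) A μ :=
    integrableOn_mul_log_of_ae_mem_Icc hμA_fin hg_meas.aestronglyMeasurable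
      (.of_forall fun x => ⟨hg_nonneg x, hgM x⟩)
  have hpl_intA : IntegrableOn (fun x => p x * Real.log (p x)) A μ :=
    integrableOn_mul_log_of_ae_mem_Icc hμA_fin hp_meas hp_range
  have hgc_intA : IntegrableOn (fun x => g x + γ⁻¹) A μ :=
    hg_intA.add (integrableOn_const hμA_fin)
  have hgp_intA : IntegrableOn (fun x => g x + p x) A μ := hg_intA.add hp_intA
  have hg_le : ∫ x in A, g x ∂μ ≤ 1 :=
    hg_one ▸ setIntegral_le_integral hg_int (.of_forall hg_nonneg)
  calc |(∫ x in A, g x * Real.log (g x) ∂μ) - ∫ x in A, p x * Real.log (p x) ∂μ|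
      = |∫ x in A, (g x * Real.log (g x) - p x * Real.log (p x)) ∂μ| := by
        rw [integral_sub hgl_intA hpl_intA]
    _ ≤ ∫ x in A, |g x * Real.log (g x) - p x * Real.log (p x)| ∂μ :=
        abs_integral_le_integral_abs
    _ ≤ ∫ x in A, (δ * (g x + γ⁻¹) + δ * γ⁻¹ * (g x + p x)) ∂μ := by
        refine integral_mono_ae (hgl_intA.sub hpl_intA).abs
          ((hgc_intA.const_mul _).add (hgp_intA.const_mul _)) ?_
        filter_upwards [hmemA, hpos] with x hgx hpx
        exact abs_mul_log_sub_mul_log_le_of_le hγ hgx hpx (hdist x)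
    _ = δ * ((∫ x in A, g x ∂μ) + μ.real A * γ⁻¹) +
          δ * γ⁻¹ * ((∫ x in A, g x ∂μ) + ∫ x in A, p x ∂μ) := by
        rw [integral_add (hgc_intA.const_mul _) (hgp_intA.const_mul _), integral_const_mul,
          integral_const_mul,
          integral_add hg_intA (integrableOn_const hμA_fin), integral_add hg_intA hp_intA,
          setIntegral_const, smul_eq_mul]
    _ ≤ δ * (1 + γ⁻¹ * γ⁻¹) + δ * γ⁻¹ * (1 + 1) := by
        have : μ.real A ≤ γ⁻¹ := by rw [← one_div, le_div_iff₀' hγ]; exact hμA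
        gcongr
    _ = (2 / γ + 1 / γ ^ 2 + 1) * δ := by field_simp; ring

end SetIntegral

section KernelDensityEstimator

variable {d : ℕ} {K : (Fin d → ℝ) → ℝ} {n : ℕ} {h : ℝ}

lemma kde_eq_sum_smul (Y : ℕ → Fin d → ℝ) (x : Fin d → ℝ) :
    kde d K Y n h x =
      ((n : ℝ) * h)⁻¹ *
        ∑ i ∈ Finset.range n, K ((h ^ ((1 : ℝ) / d))⁻¹ • (x - Y i)) := by
  simp only [kde, div_eq_inv_mul]
  rfl

lemma integrable_comp_inv_smul_sub (hK : Integrable K) {c : ℝ} (hc : c ≠ 0)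
    (v : Fin d → ℝ) :
    Integrable (fun x => K (c⁻¹ • (x - v))) :=
  (hK.comp_smul (inv_ne_zero hc)).comp_sub_right v

lemma integral_comp_rpow_inv_smul_sub (hd : d ≠ 0) (hh : 0 < h) (v : Fin d → ℝ) :
    ∫ x, K ((h ^ ((1 : ℝ) / d))⁻¹ • (x - v)) = h * ∫ t, K t := by
  rw [integral_sub_right_eq_self (fun y => K ((h ^ ((1 : ℝ) / d))⁻¹ • y)) v,
    Measure.integral_comp_inv_smul_of_nonneg volume K (by positivity), Module.finrank_fin_fun,
    one_div, Real.rpow_inv_natCast_pow hh.le hd, smul_eq_mul]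

lemma measurable_kde_uncurry (hK : Measurable K) :
    Measurable (fun z : (ℕ → Fin d → ℝ) × (Fin d → ℝ) => kde d K z.1 n h z.2) := by
  unfold kde
  fun_prop

lemma kde_nonneg (hK : ∀ t, 0 ≤ K t) (hh : 0 < h) (Y : ℕ → Fin d → ℝ)
    (x : Fin d → ℝ) :
    0 ≤ kde d K Y n h x :=
  mul_nonneg (by positivity) (Finset.sum_nonneg fun i _ => hK _)

lemma kde_le {C : ℝ} (hKC : ∀ t, K t ≤ C) (hn : n ≠ 0) (hh : 0 < h)
    (Y : ℕ → Fin d → ℝ) (x : Fin d → ℝ) : kde d K Y n h x ≤ C / h := by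
  calc kde d K Y n h x ≤ ((n : ℝ) * h)⁻¹ * ∑ _i ∈ Finset.range n, C := by
        unfold kde
        gcongr with i
        exact hKC _
    _ = C / h := by
        rw [Finset.sum_const, Finset.card_range, nsmul_eq_mul]
        field_simp

lemma integrable_kde (hK : Integrable K) (hh : 0 < h) (Y : ℕ → Fin d → ℝ) :
    Integrable (kde d K Y n h) := by
  refine Integrable.congr ?_ (.of_forall fun x => (kde_eq_sum_smul Y x).symm)
  exact (integrable_finsetSum _ fun i _ =>
    integrable_comp_inv_smul_sub hK (by positivity) (Y i)).const_mul _

lemma integral_kde (hK : ∫ t, K t = 1) (hd : d ≠ 0) (hn : n ≠ 0) (hh : 0 < h)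
    (Y : ℕ → Fin d → ℝ) : ∫ x, kde d K Y n h x = 1 := by
  have hK_int : Integrable K := Integrable.of_integral_ne_zero (by simp [hK])
  simp_rw [kde_eq_sum_smul]
  rw [integral_const_mul, integral_finsetSum _ fun i _ =>
    integrable_comp_inv_smul_sub hK_int (by positivity) (Y i)]
  simp_rw [integral_comp_rpow_inv_smul_sub hd hh, hK]
  rw [Finset.sum_const, Finset.card_range, nsmul_eq_mul]
  field_simp

end KernelDensityEstimator

section KernelDensityEstimatorMean

variable {Ω : Type*} [MeasurableSpace Ω] {P : Measure Ω} {d : ℕ} {K : (Fin d → ℝ) → ℝ}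
  {X : ℕ → Ω → Fin d → ℝ} {n : ℕ} {h : ℝ}

lemma measurable_kde_sample_uncurry (hK : Measurable K) (hX : ∀ i, Measurable (X i)) :
    Measurable (fun z : Ω × (Fin d → ℝ) => kde d K (fun i => X i z.1) n h z.2) :=
  (measurable_kde_uncurry hK).comp
    ((measurable_pi_lambda _ fun i => (hX i).comp measurable_fst).prodMk measurable_snd)

lemma kdeMean_nonneg (hK : ∀ t, 0 ≤ K t) (hh : 0 < h) (x : Fin d → ℝ) :
    0 ≤ kdeMean P d K X n h x :=
  integral_nonneg fun _ => kde_nonneg hK hh _ x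

lemma kdeMean_le [IsProbabilityMeasure P] {C : ℝ} (hK : ∀ t, 0 ≤ K t) (hKC : ∀ t, K t ≤ C)
    (hn : n ≠ 0) (hh : 0 < h) (x : Fin d → ℝ) : kdeMean P d K X n h x ≤ C / h := by
  calc kdeMean P d K X n h x ≤ ∫ _, C / h ∂P :=
        integral_mono_of_nonneg (.of_forall fun _ => kde_nonneg hK hh _ x) (integrable_const _)
          (.of_forall fun _ => kde_le hKC hn hh _ x)
    _ = C / h := by simp

lemma integrable_kde_sample_uncurry [IsProbabilityMeasure P] (hK_meas : Measurable K)
    (hK_nonneg : ∀ t, 0 ≤ K t) (hK : ∫ t, K t = 1) (hX : ∀ i, Measurable (X i))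
    (hd : d ≠ 0) (hn : n ≠ 0) (hh : 0 < h) :
    Integrable (fun z : Ω × (Fin d → ℝ) => kde d K (fun i => X i z.1) n h z.2)
      (P.prod volume) := by
  have hK_int : Integrable K := Integrable.of_integral_ne_zero (by simp [hK])
  refine (integrable_prod_iff (measurable_kde_sample_uncurry hK_meas hX).aestronglyMeasurable).2
    ⟨.of_forall fun ω => integrable_kde (Y := fun i => X i ω) hK_int hh, ?_⟩
  have hnorm : ∀ ω, ∫ x, ‖kde d K (fun i => X i ω) n h x‖ = 1 := fun ω => by
    simp_rw [Real.norm_of_nonneg (kde_nonneg hK_nonneg hh _ _)]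
    exact integral_kde hK hd hn hh _
  simp only [hnorm]
  exact integrable_const 1

lemma integral_kdeMean [IsProbabilityMeasure P] (hK_meas : Measurable K)
    (hK_nonneg : ∀ t, 0 ≤ K t) (hK : ∫ t, K t = 1) (hX : ∀ i, Measurable (X i))
    (hd : d ≠ 0) (hn : n ≠ 0) (hh : 0 < h) : ∫ x, kdeMean P d K X n h x = 1 := by
  unfold kdeMean
  rw [← integral_integral_swap
    (integrable_kde_sample_uncurry hK_meas hK_nonneg hK hX hd hn hh)]
  simp [integral_kde hK hd hn hh]

end KernelDensityEstimatorMean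

theorem statement2_general {Ω : Type*} [MeasurableSpace Ω] (P : Measure Ω) [IsProbabilityMeasure P]
    (d : ℕ) (hd : 1 ≤ d)
    (K : (Fin d → ℝ) → ℝ) (hK_meas : Measurable K) (hK_nonneg : ∀ t, 0 ≤ K t)
    (hK_bdd : BddAbove (Set.range K)) (hK_int : ∫ t, K t = 1)
    (X : ℕ → Ω → Fin d → ℝ) (hX_meas : ∀ i, Measurable (X i))
    (n : ℕ) (hn : 1 ≤ n) (h : ℝ) (hh0 : 0 < h)
    (γ : ℝ) (hγ : 0 < γ) (ω : Ω)
    (hpos : ∀ᵐ x ∂(volume.restrict {x | γ ≤ kde d K (fun i => X i ω) n h x}),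
      0 < kdeMean P d K X n h x) :
    |entEst1 d γ (kde d K (fun i => X i ω) n h) -
        entEst1Cent d γ (kde d K (fun i => X i ω) n h) (kdeMean P d K X n h)|
      ≤ (2 / γ + 1 / γ ^ 2 + 1) *
        ⨆ x, |kde d K (fun i => X i ω) n h x - kdeMean P d K X n h x| := by
  have hd0 : d ≠ 0 := Nat.one_le_iff_ne_zero.mp hd
  have hn0 : n ≠ 0 := Nat.one_le_iff_ne_zero.mp hn
  obtain ⟨C, hC⟩ := hK_bdd
  have hKC : ∀ t, K t ≤ C := fun t => hC ⟨t, rfl⟩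
  have hp_int : Integrable (kdeMean P d K X n h) :=
    (integrable_kde_sample_uncurry hK_meas hK_nonneg hK_int hX_meas hd0 hn0 hh0).integral_prod_right
  have hdist : ∀ x, |kde d K (fun i => X i ω) n h x - kdeMean P d K X n h x| ≤
      ⨆ x, |kde d K (fun i => X i ω) n h x - kdeMean P d K X n h x| :=
    le_ciSup ⟨C / h, Set.forall_mem_range.2 fun x => abs_sub_le_of_nonneg_of_le
      (kde_nonneg hK_nonneg hh0 _ x) (kde_le hKC hn0 hh0 _ x)
      (kdeMean_nonneg hK_nonneg hh0 x) (kdeMean_le hK_nonneg hKC hn0 hh0 x)⟩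
  have hp_le : ∫ x in {x | γ ≤ kde d K (fun i => X i ω) n h x}, kdeMean P d K X n h x ≤ 1 :=
    (setIntegral_le_integral hp_int (.of_forall (kdeMean_nonneg hK_nonneg hh0))).trans
      (integral_kdeMean hK_meas hK_nonneg hK_int hX_meas hd0 hn0 hh0).le
  have hint_g : Integrable (kde d K (fun i => X i ω) n h) :=
    integrable_kde (Integrable.of_integral_ne_zero (by simp [hK_int])) hh0 _
  rw [entEst1, entEst1Cent, neg_sub_neg, abs_sub_comm]
  exact abs_setIntegral_mul_log_sub_le hγ (Real.iSup_nonneg fun _ => abs_nonneg _)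
    ((measurable_kde_uncurry hK_meas).comp measurable_prodMk_left) hp_int.aestronglyMeasurable
    (kde_nonneg hK_nonneg hh0 _) (kde_le hKC hn0 hh0 _) hint_g (integral_kde hK_int hd0 hn0 hh0 _)
    hp_le hdist hpos

/-- For a nonnegative, bounded, measurable kernel with `∫K = 1`, for every
`n ≥ 1`, `0 < h ≤ 1`, `γ > 0` and every realization `ω` such that `φ_{n,h} > 0` Lebesgue-a.e.
on `A_{n,h} = {f_{n,h} ≥ γ}`, one has
`|H⁽¹⁾_{n,h} − ÊH⁽¹⁾_{n,h}| ≤ (2/γ + 1/γ² + 1) · sup_x |f_{n,h}(x) − φ_{n,h}(x)|`. -/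
theorem statement2 {Ω : Type*} [MeasurableSpace Ω] (P : Measure Ω) [IsProbabilityMeasure P]
    (d : ℕ) (hd : 1 ≤ d)
    (K : (Fin d → ℝ) → ℝ) (hK_meas : Measurable K) (hK_nonneg : ∀ t, 0 ≤ K t)
    (hK_bdd : BddAbove (Set.range K)) (hK_int : ∫ t, K t = 1)
    (X : ℕ → Ω → Fin d → ℝ) (hX_meas : ∀ i, Measurable (X i))
    (n : ℕ) (hn : 1 ≤ n) (h : ℝ) (hh0 : 0 < h) (hh1 : h ≤ 1)
    (γ : ℝ) (hγ : 0 < γ) (ω : Ω)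
    (hpos : ∀ᵐ x ∂(volume.restrict {x | γ ≤ kde d K (fun i => X i ω) n h x}),
      0 < kdeMean P d K X n h x) :
    |entEst1 d γ (kde d K (fun i => X i ω) n h) -
        entEst1Cent d γ (kde d K (fun i => X i ω) n h) (kdeMean P d K X n h)|
      ≤ (2 / γ + 1 / γ ^ 2 + 1) *
        ⨆ x, |kde d K (fun i => X i ω) n h x - kdeMean P d K X n h x| :=
  statement2_general P d hd K hK_meas hK_nonneg hK_bdd hK_int X hX_meas n hn h hh0 γ hγ ω hpos
end

section
/- Let f : ℝ^d → [0,∞) be Lebesgue-integrable, let (g_n)_{n≥1} be measurable functions ℝ^d → ℝ with ∫_{ℝ^d} |g_n(x) − f(x)| dx → 0, and let (γ_n)_{n≥1} be positive reals with γ_n → 0. Then ∫_{{x : g_n(x) < γ_n}} f(x) dx → 0 as n → ∞. -/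
open MeasureTheory Filter Set
open scoped Topology

/-! On `{gₙ < γₙ}` either `f ≤ 2γₙ`, or `f > 2γₙ > 2gₙ` and then `f ≤ 2(f − gₙ)`; hence
`∫_{gₙ<γₙ} f ≤ ∫_{f ≤ 2γₙ} f + 2‖gₙ − f‖₁`. The first term tends to `0` by dominated convergence
(bound `f`), since `1_{f ≤ 2γₙ} f → 0` pointwise: at points with `f > 0` the indicator eventually
vanishes. -/

section

variable {α : Type*} {f g : α → ℝ}

lemma indicator_setOf_lt_le_indicator_setOf_le_add {γ : ℝ} {x : α} (hfx : 0 ≤ f x) :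
    {y | g y < γ}.indicator f x ≤ {y | f y ≤ 2 * γ}.indicator f x + 2 * |g x - f x| := by
  have hfg : f x - g x ≤ |g x - f x| := by rw [abs_sub_comm]; exact le_abs_self _
  simp only [indicator_apply, mem_ofPred_eq]
  split_ifs <;> linarith [abs_nonneg (g x - f x)]

variable [MeasurableSpace α] {μ : Measure α}

lemma setIntegral_setOf_lt_le_setIntegral_setOf_le_add (hf : Integrable f μ) (hf0 : 0 ≤ᵐ[μ] f)
    (hg : Integrable g μ) (γ : ℝ) :
    ∫ x in {x | g x < γ}, f x ∂μ ≤ ∫ x in {x | f x ≤ 2 * γ}, f x ∂μ + 2 * ∫ x, |g x - f x| ∂μ := by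
  have hlt : NullMeasurableSet {x | g x < γ} μ :=
    nullMeasurableSet_lt hg.aemeasurable aemeasurable_const
  have hle : NullMeasurableSet {x | f x ≤ 2 * γ} μ :=
    nullMeasurableSet_le hf.aemeasurable aemeasurable_const
  have hdiff : Integrable (fun x => 2 * |g x - f x|) μ := ((hg.sub hf).abs).const_mul 2
  rw [← integral_indicator₀ hlt, ← integral_indicator₀ hle, ← integral_const_mul,
    ← integral_add (hf.indicator₀ hle) hdiff]
  refine integral_mono_ae (hf.indicator₀ hlt) ((hf.indicator₀ hle).add hdiff) ?_
  filter_upwards [hf0] with x hfx using indicator_setOf_lt_le_indicator_setOf_le_add hfx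

lemma tendsto_setIntegral_setOf_le_of_tendsto_zero {ι : Type*} {l : Filter ι}
    [l.IsCountablyGenerated] (hf : Integrable f μ) (hf0 : 0 ≤ᵐ[μ] f) {t : ι → ℝ}
    (ht : Tendsto t l (𝓝 0)) :
    Tendsto (fun i => ∫ x in {x | f x ≤ t i}, f x ∂μ) l (𝓝 0) := by
  have hle : ∀ i, NullMeasurableSet {x | f x ≤ t i} μ := fun i =>
    nullMeasurableSet_le hf.aemeasurable aemeasurable_const
  simp_rw [← integral_indicator₀ (hle _)]
  rw [← integral_zero α ℝ]
  refine tendsto_integral_filter_of_dominated_convergence (fun x => ‖f x‖)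
    (.of_forall fun i => hf.aestronglyMeasurable.indicator₀ (hle i))
    (.of_forall fun _ => ae_of_all _ fun x => norm_indicator_le_norm_self f x) hf.norm ?_
  filter_upwards [hf0] with x hfx
  refine tendsto_const_nhds.congr' ?_
  have hvanish : ∀ᶠ i in l, f x ≤ t i → f x = 0 := by
    rcases hfx.eq_or_lt with h0 | hpos
    · exact Eventually.of_forall fun _ _ => h0.symm
    · filter_upwards [ht.eventually (eventually_lt_nhds hpos)] with i hi hle using
        absurd hle (not_le.mpr hi)
  filter_upwards [hvanish] with i hi using (indicator_apply_eq_zero.mpr hi).symm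

end

theorem statement5_general (d : ℕ) (f : (Fin d → ℝ) → ℝ)
    (hf_nonneg : ∀ x, 0 ≤ f x) (hf_int : Integrable f)
    (g : ℕ → (Fin d → ℝ) → ℝ)
    (hg_int : ∀ n, Integrable (g n))
    (hL1 : Tendsto (fun n => ∫ x, |g n x - f x|) atTop (nhds 0))
    (γ : ℕ → ℝ) (hγ_lim : Tendsto γ atTop (nhds 0)) :
    Tendsto (fun n => ∫ x in {x | g n x < γ n}, f x) atTop (nhds 0) := by
  have hf0 : 0 ≤ᵐ[volume] f := ae_of_all _ hf_nonneg
  have hsmall : Tendsto (fun n => ∫ x in {x | f x ≤ 2 * γ n}, f x) atTop (𝓝 0) :=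
    tendsto_setIntegral_setOf_le_of_tendsto_zero hf_int hf0 (by simpa using hγ_lim.const_mul 2)
  have hbound : Tendsto (fun n => (∫ x in {x | f x ≤ 2 * γ n}, f x) + 2 * ∫ x, |g n x - f x|)
      atTop (𝓝 0) := by
    simpa using hsmall.add (hL1.const_mul 2)
  exact tendsto_of_tendsto_of_tendsto_of_le_of_le tendsto_const_nhds hbound
    (fun _ => setIntegral_nonneg_of_ae hf0)
    (fun n => setIntegral_setOf_lt_le_setIntegral_setOf_le_add hf_int hf0 (hg_int n) (γ n))

/-- If `f : ℝ^d → [0,∞)` is Lebesgue-integrable, `gₙ` are measurable with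
`∫ |gₙ − f| → 0`, and `γₙ > 0` with `γₙ → 0`, then `∫_{{gₙ < γₙ}} f → 0`. -/
theorem statement5 (d : ℕ) (f : (Fin d → ℝ) → ℝ) (hf_meas : Measurable f)
    (hf_nonneg : ∀ x, 0 ≤ f x) (hf_int : Integrable f)
    (g : ℕ → (Fin d → ℝ) → ℝ) (hg_meas : ∀ n, Measurable (g n))
    (hg_int : ∀ n, Integrable (g n))
    (hL1 : Tendsto (fun n => ∫ x, |g n x - f x|) atTop (nhds 0))
    (γ : ℕ → ℝ) (hγ_pos : ∀ n, 0 < γ n) (hγ_lim : Tendsto γ atTop (nhds 0)) :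
    Tendsto (fun n => ∫ x in {x | g n x < γ n}, f x) atTop (nhds 0) :=
  statement5_general d f hf_nonneg hf_int g hg_int hL1 γ hγ_lim
end

section
/- Let s ≥ 1 and let f : ℝ^d → ℝ be s-times continuously differentiable with compact support, all of whose partial derivatives of total order s are bounded in absolute value by a constant M < ∞. Let K : ℝ^d → ℝ be integrable with ∫_{ℝ^d} K(t) dt = 1, ∫_{ℝ^d} t_1^{j_1}⋯t_d^{j_d} K(t) dt = 0 for all nonnegative integers j_1,…,j_d with 1 ≤ j_1+⋯+j_d ≤ s−1, and ∫_{ℝ^d} |t_1^{j_1}⋯t_d^{j_d}| |K(t)| dt < ∞ for all j_1+⋯+j_d = s. Then there is a constant C < ∞ such that for all 0 < h ≤ 1, sup_{x∈ℝ^d} |∫_{ℝ^d} K(t) f(x − h^{1/d} t) dt − f(x)| ≤ C h^{s/d}. -/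
/-!
Write `ε = h^{1/d}` and expand `f (x - ε t)` to order `s - 1` around `x`. The Taylor term of
degree `k` is a `k`-linear form in `t`, hence a combination of monomials of total degree `k`:
integrated against `K`, the terms with `1 ≤ k ≤ s - 1` vanish and the constant term gives `f x`.
Only the Lagrange remainder survives, and it is at most `M ε^s ‖t‖^s / (s-1)!`; the weight
`‖t‖^s |K t|` is integrable because `‖t‖^s ≤ ∑ |t j|^s` for the sup norm.
-/

open MeasureTheory Set
open scoped Nat Finset

section Taylor

variable {E F : Type*} [NormedAddCommGroup E] [NormedSpace ℝ E]
  [NormedAddCommGroup F] [NormedSpace ℝ F]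

/-- The order-`n` Taylor polynomial of `f` at `x`, evaluated at the increment `v`, i.e. at the
point `x + v`. -/
noncomputable def taylorEval (f : E → F) (n : ℕ) (x v : E) : F :=
  ∑ k ∈ Finset.range (n + 1), (k ! : ℝ)⁻¹ • iteratedFDeriv ℝ k f x (fun _ => v)

theorem iteratedDeriv_comp_add_smul {f : E → F} {N : WithTop ℕ∞} (hf : ContDiff ℝ N f)
    {k : ℕ} (hk : k ≤ N) (x v : E) (u : ℝ) :
    iteratedDeriv k (fun u : ℝ => f (x + u • v)) u
      = iteratedFDeriv ℝ k f (x + u • v) (fun _ => v) := by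
  have hline : (fun u : ℝ => f (x + u • v))
      = (fun y => f (x + y)) ∘ ContinuousLinearMap.toSpanSingleton ℝ v := by
    ext u; simp
  have hshift : ContDiff ℝ N (fun y => f (x + y)) := hf.comp (contDiff_const.add contDiff_id)
  rw [iteratedDeriv_eq_iteratedFDeriv, hline,
    ContinuousLinearMap.iteratedFDeriv_comp_right _ hshift _ hk, iteratedFDeriv_comp_add_left]
  simp

theorem norm_sub_taylorEval_le {f : E → F} {n : ℕ} (hf : ContDiff ℝ (n + 1) f) {M : ℝ}
    (hM : ∀ z, ‖iteratedFDeriv ℝ (n + 1) f z‖ ≤ M) (x v : E) :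
    ‖f (x + v) - taylorEval f n x v‖ ≤ M / n ! * ‖v‖ ^ (n + 1) := by
  set g : ℝ → F := fun u => f (x + u • v)
  have hg : ContDiff ℝ (n + 1) g :=
    hf.comp (contDiff_const.add (contDiff_id.smul contDiff_const))
  have hg_deriv : ∀ k : ℕ, k ≤ n + 1 → ∀ u ∈ Icc (0 : ℝ) 1,
      iteratedDerivWithin k g (Icc 0 1) u = iteratedFDeriv ℝ k f (x + u • v) (fun _ => v) := by
    intro k hk u hu
    rw [iteratedDerivWithin_eq_iteratedDeriv uniqueDiffOn_Icc_zero_one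
      (hg.contDiffAt.of_le (by exact_mod_cast hk)) hu,
      iteratedDeriv_comp_add_smul hf (by exact_mod_cast hk)]
  have hbound : ∀ u ∈ Icc (0 : ℝ) 1,
      ‖iteratedDerivWithin (n + 1) g (Icc 0 1) u‖ ≤ M * ‖v‖ ^ (n + 1) := fun u hu => by
    rw [hg_deriv (n + 1) le_rfl u hu]
    simpa using (iteratedFDeriv ℝ (n + 1) f (x + u • v)).le_of_opNorm_le (hM _) (fun _ => v)
  have htaylor : taylorWithinEval g n (Icc 0 1) 0 1 = taylorEval f n x v := by
    rw [taylor_within_apply, taylorEval]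
    refine Finset.sum_congr rfl fun k hk => ?_
    rw [hg_deriv k (by simp at hk; omega) 0 (left_mem_Icc.mpr zero_le_one)]
    simp
  have := taylor_mean_remainder_bound zero_le_one hg.contDiffOn
    (right_mem_Icc.mpr zero_le_one) hbound
  rw [htaylor] at this
  simpa [g, div_mul_eq_mul_div, mul_comm] using this

theorem taylorEval_smul (f : E → F) (n : ℕ) (x v : E) (c : ℝ) :
    taylorEval f n x (c • v)
      = ∑ k ∈ Finset.range (n + 1), (c ^ k / k !) • iteratedFDeriv ℝ k f x (fun _ => v) := by
  refine Finset.sum_congr rfl fun k _ => ?_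
  rw [(iteratedFDeriv ℝ k f x).map_smul_univ (fun _ => c), smul_smul]
  simp [div_eq_inv_mul]

end Taylor

section Monomials

variable {d : ℕ}

theorem prod_apply_eq_prod_pow_card_fiber {k : ℕ} (r : Fin k → Fin d) (t : Fin d → ℝ) :
    ∏ i, t (r i) = ∏ j, t j ^ #{i | r i = j} := by
  rw [← Finset.prod_fiberwise Finset.univ r]
  refine Finset.prod_congr rfl fun j _ => ?_
  rw [Finset.prod_congr rfl fun i hi => by rw [(Finset.mem_filter.mp hi).2], Finset.prod_const]

theorem sum_card_fiber {k : ℕ} (r : Fin k → Fin d) : ∑ j, #{i | r i = j} = k := by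
  simpa using (Finset.card_eq_sum_card_fiberwise (f := r) (s := Finset.univ) (t := Finset.univ)
    fun i _ => Finset.mem_univ _).symm

theorem ContinuousMultilinearMap.apply_diag_eq_sum {k : ℕ}
    (P : ContinuousMultilinearMap ℝ (fun _ : Fin k => Fin d → ℝ) ℝ) (t : Fin d → ℝ) :
    P (fun _ => t) = ∑ r : Fin k → Fin d,
      (∏ j, t j ^ #{i | r i = j}) * P (fun i => Pi.single (r i) 1) := by
  have ht : t = ∑ j, t j • Pi.single j (1 : ℝ) := by
    ext j; simp [Pi.single_apply]
  conv_lhs => rw [ht, P.map_sum]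
  refine Finset.sum_congr rfl fun r _ => ?_
  rw [P.map_smul_univ, smul_eq_mul, prod_apply_eq_prod_pow_card_fiber]

theorem norm_pow_le_sum_abs_pow {s : ℕ} (hs : s ≠ 0) (t : Fin d → ℝ) :
    ‖t‖ ^ s ≤ ∑ j, |t j| ^ s := by
  cases isEmpty_or_nonempty (Fin d)
  · simp [Subsingleton.elim t 0, hs]
  · obtain ⟨j, hj⟩ := (IsGreatest.pi_norm t).1
    rw [← hj]
    exact Finset.single_le_sum (f := fun j => |t j| ^ s) (fun _ _ => by positivity)
      (Finset.mem_univ j)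

theorem prod_abs_pow_le_one_add_norm_pow {s : ℕ} (m : Fin d → ℕ) (hm : ∑ j, m j ≤ s)
    (t : Fin d → ℝ) : ∏ j, |t j| ^ m j ≤ 1 + ‖t‖ ^ s := by
  have hprod : ∏ j, |t j| ^ m j ≤ ‖t‖ ^ ∑ j, m j := by
    rw [← Finset.prod_pow_eq_pow_sum]
    exact Finset.prod_le_prod (fun _ _ => by positivity)
      fun j _ => pow_le_pow_left₀ (abs_nonneg _) (norm_le_pi_norm t j) _
  rcases le_total ‖t‖ 1 with ht | ht
  · linarith [pow_le_one₀ (norm_nonneg t) ht (n := ∑ j, m j), pow_nonneg (norm_nonneg t) s]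
  · linarith [pow_le_pow_right₀ ht hm]

end Monomials

section Kernel

variable {d : ℕ}

def HasVanishingMoments (K : (Fin d → ℝ) → ℝ) (s : ℕ) : Prop :=
  ∀ j : Fin d → ℕ, 1 ≤ ∑ k, j k → ∑ k, j k ≤ s - 1 → ∫ t, (∏ k, (t k) ^ (j k)) * K t = 0

def HasFiniteAbsMoments (K : (Fin d → ℝ) → ℝ) (s : ℕ) : Prop :=
  ∀ j : Fin d → ℕ, ∑ k, j k = s → Integrable (fun t => (∏ k, |t k| ^ (j k)) * |K t|)

/-- The paper's `φ_{n,h}(x)`, the mean of the kernel density estimator, with `ε = h^{1/d}`. -/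
noncomputable def kernelSmoothing (K f : (Fin d → ℝ) → ℝ) (ε : ℝ) (x : Fin d → ℝ) : ℝ :=
  ∫ t, K t * f (x - ε • t)

variable {K : (Fin d → ℝ) → ℝ} {s : ℕ}

theorem HasFiniteAbsMoments.integrable_norm_pow_mul_abs (hKs : HasFiniteAbsMoments K s)
    (hK : AEStronglyMeasurable K) (hs : s ≠ 0) : Integrable (fun t => ‖t‖ ^ s * |K t|) := by
  have hcoord : ∀ j, Integrable (fun t : Fin d → ℝ => |t j| ^ s * |K t|) := fun j => by
    convert hKs (Pi.single j s) (by simp) using 3 with t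
    rw [Fintype.prod_eq_single j fun k hk => by simp [Pi.single_eq_of_ne hk], Pi.single_eq_same]
  refine (integrable_finsetSum Finset.univ fun j _ => hcoord j).mono
    ((continuous_norm.pow s).aestronglyMeasurable.mul hK.norm) (ae_of_all _ fun t => ?_)
  rw [← Finset.sum_mul, norm_mul, norm_mul, Real.norm_of_nonneg (by positivity),
    Real.norm_of_nonneg (Finset.sum_nonneg fun _ _ => by positivity), Real.norm_eq_abs, abs_abs]
  gcongr
  exact norm_pow_le_sum_abs_pow hs t

theorem HasFiniteAbsMoments.integrable_monomial_mul (hKs : HasFiniteAbsMoments K s)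
    (hK : Integrable K) (hs : s ≠ 0) (m : Fin d → ℕ) (hm : ∑ j, m j ≤ s) :
    Integrable (fun t => (∏ j, t j ^ m j) * K t) := by
  refine (hK.abs.add (hKs.integrable_norm_pow_mul_abs hK.1 hs)).mono'
    ((continuous_finsetProd _ fun j _ => (continuous_apply j).pow _).aestronglyMeasurable.mul
      hK.1) (ae_of_all _ fun t => ?_)
  calc ‖(∏ j, t j ^ m j) * K t‖ = (∏ j, |t j| ^ m j) * |K t| := by simp
    _ ≤ (1 + ‖t‖ ^ s) * |K t| := by gcongr; exact prod_abs_pow_le_one_add_norm_pow m hm t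
    _ = |K t| + ‖t‖ ^ s * |K t| := by ring

theorem mul_apply_diag_eq_sum {k : ℕ} (K : (Fin d → ℝ) → ℝ)
    (P : ContinuousMultilinearMap ℝ (fun _ : Fin k => Fin d → ℝ) ℝ) :
    (fun t => K t * P (fun _ => t)) = fun t => ∑ r : Fin k → Fin d,
      P (fun i => Pi.single (r i) 1) * ((∏ j, t j ^ #{i | r i = j}) * K t) := by
  ext t
  rw [P.apply_diag_eq_sum, Finset.mul_sum]
  exact Finset.sum_congr rfl fun r _ => by ring

theorem HasFiniteAbsMoments.integrable_mul_apply_diag (hKs : HasFiniteAbsMoments K s)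
    (hK : Integrable K) (hs : s ≠ 0) {k : ℕ}
    (P : ContinuousMultilinearMap ℝ (fun _ : Fin k => Fin d → ℝ) ℝ) (hk : k ≤ s) :
    Integrable (fun t => K t * P (fun _ => t)) := by
  rw [mul_apply_diag_eq_sum]
  exact integrable_finsetSum _ fun r _ =>
    (hKs.integrable_monomial_mul hK hs _ ((sum_card_fiber r).trans_le hk)).const_mul _

theorem HasVanishingMoments.integral_mul_apply_diag_eq_zero (hK0 : HasVanishingMoments K s)
    (hKs : HasFiniteAbsMoments K s) (hK : Integrable K) {k : ℕ}
    (P : ContinuousMultilinearMap ℝ (fun _ : Fin k => Fin d → ℝ) ℝ) (hk0 : k ≠ 0) (hks : k < s) :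
    ∫ t, K t * P (fun _ => t) = 0 := by
  rw [mul_apply_diag_eq_sum, integral_finsetSum _ fun r _ =>
    (hKs.integrable_monomial_mul hK (by omega) _ ((sum_card_fiber r).trans_le hks.le)).const_mul _]
  refine Finset.sum_eq_zero fun r _ => ?_
  rw [integral_const_mul, hK0 _ (by rw [sum_card_fiber]; omega) (by rw [sum_card_fiber]; omega),
    mul_zero]

theorem mul_taylorEval_smul_eq_sum (K f : (Fin d → ℝ) → ℝ) (n : ℕ) (x : Fin d → ℝ) (c : ℝ) :
    (fun t => K t * taylorEval f n x (c • t)) = fun t => ∑ k ∈ Finset.range (n + 1),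
      c ^ k / k ! * (K t * iteratedFDeriv ℝ k f x (fun _ => t)) := by
  ext t
  rw [taylorEval_smul, Finset.mul_sum]
  exact Finset.sum_congr rfl fun k _ => by rw [smul_eq_mul]; ring

theorem HasFiniteAbsMoments.integrable_mul_taylorEval_smul {n : ℕ}
    (hKs : HasFiniteAbsMoments K (n + 1)) (hK : Integrable K) (f : (Fin d → ℝ) → ℝ)
    (x : Fin d → ℝ) (c : ℝ) : Integrable (fun t => K t * taylorEval f n x (c • t)) := by
  rw [mul_taylorEval_smul_eq_sum]
  exact integrable_finsetSum _ fun k hk => (hKs.integrable_mul_apply_diag hK (by omega) _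
    (by simp at hk; omega)).const_mul _

theorem HasVanishingMoments.integral_mul_taylorEval_smul {n : ℕ} (hK1 : ∫ t, K t = 1)
    (hK0 : HasVanishingMoments K (n + 1)) (hKs : HasFiniteAbsMoments K (n + 1))
    (hK : Integrable K) (f : (Fin d → ℝ) → ℝ) (x : Fin d → ℝ) (c : ℝ) :
    ∫ t, K t * taylorEval f n x (c • t) = f x := by
  rw [mul_taylorEval_smul_eq_sum, integral_finsetSum _ fun k hk =>
    (hKs.integrable_mul_apply_diag hK (by omega) _ (by simp at hk; omega)).const_mul _,
    Finset.sum_range_succ']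
  have hhigher : ∀ k ∈ Finset.range n,
      ∫ t, c ^ (k + 1) / (k + 1)! * (K t * iteratedFDeriv ℝ (k + 1) f x (fun _ => t)) = 0 :=
    fun k hk => by
      rw [integral_const_mul, hK0.integral_mul_apply_diag_eq_zero hKs hK _ k.succ_ne_zero
        (by simp at hk; omega), mul_zero]
  simp [Finset.sum_eq_zero hhigher, integral_mul_const, hK1]

theorem abs_kernelSmoothing_sub_le {n : ℕ} {f : (Fin d → ℝ) → ℝ}
    (hf : ContDiff ℝ (n + 1) f) (hf_supp : HasCompactSupport f) {M : ℝ}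
    (hM : ∀ z, ‖iteratedFDeriv ℝ (n + 1) f z‖ ≤ M) (hK1 : ∫ t, K t = 1)
    (hK0 : HasVanishingMoments K (n + 1)) (hKs : HasFiniteAbsMoments K (n + 1))
    (hK : Integrable K) (x : Fin d → ℝ) (ε : ℝ) :
    |kernelSmoothing K f ε x - f x|
      ≤ M / n ! * (∫ t, ‖t‖ ^ (n + 1) * |K t|) * |ε| ^ (n + 1) := by
  set T := fun t : Fin d → ℝ => taylorEval f n x ((-ε) • t)
  have hf_int : Integrable (fun t => K t * f (x - ε • t)) := by
    obtain ⟨C, hC⟩ := hf.continuous.bounded_above_of_compact_support hf_supp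
    exact hK.mul_bdd ((hf.continuous.comp (continuous_const.sub
      (continuous_id.const_smul ε))).aestronglyMeasurable) (ae_of_all _ fun t => hC _)
  have hremainder : ∀ t, ‖K t * (f (x - ε • t) - T t)‖
      ≤ M / n ! * |ε| ^ (n + 1) * (‖t‖ ^ (n + 1) * |K t|) := fun t => by
    have hx : x - ε • t = x + (-ε) • t := by rw [neg_smul, sub_eq_add_neg]
    have hv : ‖(-ε) • t‖ = |ε| * ‖t‖ := by rw [norm_smul, Real.norm_eq_abs, abs_neg]
    calc ‖K t * (f (x - ε • t) - T t)‖ = |K t| * ‖f (x + (-ε) • t) - T t‖ := by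
          rw [norm_mul, Real.norm_eq_abs, hx]
      _ ≤ |K t| * (M / n ! * ‖(-ε) • t‖ ^ (n + 1)) := by
          gcongr; exact norm_sub_taylorEval_le hf hM x _
      _ = M / n ! * |ε| ^ (n + 1) * (‖t‖ ^ (n + 1) * |K t|) := by rw [hv]; ring
  calc |kernelSmoothing K f ε x - f x| = ‖∫ t, K t * (f (x - ε • t) - T t)‖ := by
        simp_rw [kernelSmoothing, mul_sub]
        rw [integral_sub hf_int (hKs.integrable_mul_taylorEval_smul hK f x _),
          hK0.integral_mul_taylorEval_smul hK1 hKs hK, Real.norm_eq_abs]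
    _ ≤ ∫ t, M / n ! * |ε| ^ (n + 1) * (‖t‖ ^ (n + 1) * |K t|) :=
        norm_integral_le_of_norm_le
          ((hKs.integrable_norm_pow_mul_abs hK.1 n.succ_ne_zero).const_mul _)
          (ae_of_all _ hremainder)
    _ = M / n ! * (∫ t, ‖t‖ ^ (n + 1) * |K t|) * |ε| ^ (n + 1) := by
        rw [integral_const_mul]; ring

end Kernel

theorem statement7_general (d s : ℕ) (hs : 1 ≤ s)
    (f : (Fin d → ℝ) → ℝ) (hf_smooth : ContDiff ℝ (s : ℕ∞) f)
    (hf_supp : HasCompactSupport f)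
    (M : ℝ) (hM : ∀ x, ‖iteratedFDeriv ℝ s f x‖ ≤ M)
    (K : (Fin d → ℝ) → ℝ) (hK_int : Integrable K) (hK_one : ∫ t, K t = 1)
    (hK_mom0 : ∀ j : Fin d → ℕ, 1 ≤ ∑ k, j k → ∑ k, j k ≤ s - 1 →
      ∫ t, (∏ k, (t k) ^ (j k)) * K t = 0)
    (hK_moms : ∀ j : Fin d → ℕ, ∑ k, j k = s →
      Integrable (fun t => (∏ k, |t k| ^ (j k)) * |K t|)) :
    ∃ C : ℝ, ∀ h : ℝ, 0 < h → h ≤ 1 → ∀ x : Fin d → ℝ,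
      |(∫ t, K t * f (x - h ^ ((1 : ℝ) / d) • t)) - f x| ≤ C * h ^ ((s : ℝ) / d) := by
  obtain ⟨n, rfl⟩ : ∃ n, s = n + 1 := ⟨s - 1, by omega⟩
  refine ⟨M / n ! * ∫ t, ‖t‖ ^ (n + 1) * |K t|, fun h hh _ x => ?_⟩
  have hscale : |h ^ ((1 : ℝ) / d)| ^ (n + 1) = h ^ (((n + 1 : ℕ) : ℝ) / d) := by
    rw [abs_of_nonneg (by positivity), ← Real.rpow_natCast, ← Real.rpow_mul hh.le]
    ring_nf
  rw [← hscale]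
  exact abs_kernelSmoothing_sub_le (by exact_mod_cast hf_smooth) hf_supp hM hK_one
    hK_mom0 hK_moms hK_int x _

/-- (Bias bound, equation (17) of the paper.) If `f` is `s`-times continuously
differentiable with compact support and order-`s` partials bounded by `M`, and the kernel `K`
is integrable with `∫K = 1`, vanishing moments of total orders `1,…,s−1`, and finite absolute
moments of total order `s`, then for some `C < ∞` and all `0 < h ≤ 1`,
`sup_x |∫ K(t) f(x − h^{1/d} t) dt − f(x)| ≤ C h^{s/d}`. -/
theorem statement7 (d s : ℕ) (hd : 1 ≤ d) (hs : 1 ≤ s)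
    (f : (Fin d → ℝ) → ℝ) (hf_smooth : ContDiff ℝ (s : ℕ∞) f)
    (hf_supp : HasCompactSupport f)
    (M : ℝ) (hM : ∀ x, ‖iteratedFDeriv ℝ s f x‖ ≤ M)
    (K : (Fin d → ℝ) → ℝ) (hK_int : Integrable K) (hK_one : ∫ t, K t = 1)
    (hK_mom0 : ∀ j : Fin d → ℕ, 1 ≤ ∑ k, j k → ∑ k, j k ≤ s - 1 →
      ∫ t, (∏ k, (t k) ^ (j k)) * K t = 0)
    (hK_moms : ∀ j : Fin d → ℕ, ∑ k, j k = s →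
      Integrable (fun t => (∏ k, |t k| ^ (j k)) * |K t|)) :
    ∃ C : ℝ, ∀ h : ℝ, 0 < h → h ≤ 1 → ∀ x : Fin d → ℝ,
      |(∫ t, K t * f (x - h ^ ((1 : ℝ) / d) • t)) - f x| ≤ C * h ^ ((s : ℝ) / d) :=
  statement7_general d s hs f hf_smooth hf_supp M hM K hK_int hK_one hK_mom0 hK_moms
end

section
/- Let J ⊆ ℝ^d be measurable, let γ > 0, and let f, g : ℝ^d → [0,∞) be measurable with ∫_J f(x) dx ≤ 1, ∫_J g(x) dx ≤ 1, f(x) ≥ 2γ for all x ∈ J, and sup_{x∈J} |g(x) − f(x)| ≤ γ. Then |∫_J g(x) log g(x) dx − ∫_J f(x) log f(x) dx| ≤ (2/γ + 1/γ² + 1) · sup_{x∈J} |g(x) − f(x)|. -/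
/-!
On `J` we have `g ≥ γ` as well as `f ≥ 2γ`, so both logarithms are tame there: the identity
`g log g - f log f = (g - f) log g + f (log g - log f)`, together with `|log g| ≤ 1/γ + g` and
`|log g - log f| ≤ |g - f| / γ`, bounds the integrand by `M (1/γ + g + f/γ)`, where `M` is the
supremum of `|g - f|` on `J`. Since `f ≥ 2γ` and `∫_J f ≤ 1`, the volume of `J` is at most
`1/(2γ)`, so the integral of this bound is at most `M (1/(2γ²) + 1 + 1/γ)`.
-/

open MeasureTheory Set

namespace Real

lemma abs_log_le_inv_add_self_s8 {x : ℝ} (hx : 0 < x) : |log x| ≤ x⁻¹ + x := by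
  have h₁ := log_le_sub_one_of_pos hx
  have h₂ := one_sub_inv_le_log_of_pos hx
  have h₃ := inv_pos.2 hx
  exact abs_le.2 ⟨by linarith, by linarith⟩

lemma log_sub_log_le_abs_sub_div {c x y : ℝ} (hc : 0 < c) (hx : c ≤ x) (hy : c ≤ y) :
    log y - log x ≤ |y - x| / c := by
  have hx₀ : 0 < x := hc.trans_le hx
  calc log y - log x = log (y / x) := (log_div (hc.trans_le hy).ne' hx₀.ne').symm
    _ ≤ y / x - 1 := log_le_sub_one_of_pos (div_pos (hc.trans_le hy) hx₀)
    _ = (y - x) / x := by field_simp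
    _ ≤ |y - x| / x := by gcongr; exact le_abs_self _
    _ ≤ |y - x| / c := by gcongr

lemma abs_log_sub_log_le {c x y : ℝ} (hc : 0 < c) (hx : c ≤ x) (hy : c ≤ y) :
    |log y - log x| ≤ |y - x| / c :=
  abs_sub_le_iff.2 ⟨log_sub_log_le_abs_sub_div hc hx hy,
    abs_sub_comm y x ▸ log_sub_log_le_abs_sub_div hc hy hx⟩

lemma abs_mul_log_sub_mul_log_le {c ε x y : ℝ} (hc : 0 < c) (hx : c ≤ x) (hy : c ≤ y)
    (hxy : |y - x| ≤ ε) :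
    |y * log y - x * log x| ≤ ε * (c⁻¹ + y + x / c) := by
  have hx₀ : 0 < x := hc.trans_le hx
  have hy₀ : 0 < y := hc.trans_le hy
  have h_log : |log y| ≤ c⁻¹ + y :=
    (abs_log_le_inv_add_self_s8 hy₀).trans (by gcongr)
  calc |y * log y - x * log x| = |(y - x) * log y + x * (log y - log x)| := by ring_nf
    _ ≤ |y - x| * |log y| + x * |log y - log x| := by
        refine (abs_add_le _ _).trans_eq ?_
        rw [abs_mul, abs_mul, abs_of_pos hx₀]
    _ ≤ ε * (c⁻¹ + y) + x * (ε / c) := by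
        gcongr
        · exact (abs_nonneg _).trans hxy
        · exact (abs_log_sub_log_le hc hx hy).trans (by gcongr)
    _ = ε * (c⁻¹ + y + x / c) := by ring

end Real

namespace MeasureTheory

variable {α : Type*} [MeasurableSpace α] {μ : Measure α}

/-- No integrability of `F`, `G` is needed: if one is integrable so is the other, and otherwise
both integrals are the junk value `0` while `∫ H ≥ 0`. -/
theorem abs_integral_sub_integral_le_of_abs_sub_le {F G H : α → ℝ}
    (hF : AEStronglyMeasurable F μ) (hG : AEStronglyMeasurable G μ) (hH : Integrable H μ)
    (hFG : ∀ᵐ x ∂μ, |F x - G x| ≤ H x) :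
    |∫ x, F x ∂μ - ∫ x, G x ∂μ| ≤ ∫ x, H x ∂μ := by
  have h_sub : Integrable (F - G) μ := hH.mono' (hF.sub hG) hFG
  by_cases hG_int : Integrable G μ
  · have hF_int : Integrable F μ := by simpa using h_sub.add hG_int
    rw [← integral_sub hF_int hG_int]
    exact (abs_integral_le_integral_abs).trans (integral_mono_ae h_sub.abs hH hFG)
  · have hF_int : ¬ Integrable F μ := fun hF_int => hG_int (by simpa using hF_int.sub h_sub)
    rw [integral_undef hF_int, integral_undef hG_int, sub_zero, abs_zero]
    exact integral_nonneg_of_ae (hFG.mono fun x hx => (abs_nonneg _).trans hx)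

lemma IntegrableOn.measure_lt_top_of_le {f : α → ℝ} {s : Set α} {c : ℝ}
    (hf : IntegrableOn f s μ) (hc : 0 < c) (hfc : ∀ x ∈ s, c ≤ f x) : μ s < ⊤ :=
  calc μ s = μ ({x | c ≤ f x} ∩ s) := by rw [inter_eq_right.2 (show s ⊆ {x | c ≤ f x} from hfc)]
    _ ≤ μ.restrict s {x | c ≤ f x} := Measure.le_restrict_apply _ _
    _ < ⊤ := hf.measure_ge_lt_top hc

lemma measureReal_le_setIntegral_div {f : α → ℝ} {s : Set α} {c : ℝ} (hs : MeasurableSet s)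
    (hf : IntegrableOn f s μ) (hc : 0 < c) (hfc : ∀ x ∈ s, c ≤ f x) :
    μ.real s ≤ (∫ x in s, f x ∂μ) / c := by
  rw [le_div_iff₀ hc, mul_comm]
  exact setIntegral_ge_of_const_le_real hs (hf.measure_lt_top_of_le hc hfc).ne hfc hf

end MeasureTheory

theorem statement8_general (d : ℕ) (J : Set (Fin d → ℝ)) (hJ : MeasurableSet J)
    (γ : ℝ) (hγ : 0 < γ)
    (f g : (Fin d → ℝ) → ℝ)
    (hf_int : IntegrableOn f J) (hg_int : IntegrableOn g J)
    (hf_le : ∫ x in J, f x ≤ 1) (hg_le : ∫ x in J, g x ≤ 1)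
    (hf_lb : ∀ x ∈ J, 2 * γ ≤ f x)
    (h_close : ∀ x ∈ J, |g x - f x| ≤ γ) :
    |(∫ x in J, g x * Real.log (g x)) - ∫ x in J, f x * Real.log (f x)|
      ≤ (2 / γ + 1 / γ ^ 2 + 1) * ⨆ x : J, |g x - f x| := by
  set M := ⨆ x : J, |g x - f x|
  have hM : ∀ x ∈ J, |g x - f x| ≤ M := fun x hx =>
    le_ciSup (f := fun x : J => |g x - f x|) ⟨γ, forall_mem_range.2 fun x => h_close x x.2⟩ ⟨x, hx⟩
  have hM₀ : 0 ≤ M := Real.iSup_nonneg fun _ => abs_nonneg _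
  have hf_ge : ∀ x ∈ J, γ ≤ f x := fun x hx => by linarith [hf_lb x hx]
  have hg_ge : ∀ x ∈ J, γ ≤ g x := fun x hx => by
    linarith [hf_lb x hx, (abs_le.1 (h_close x hx)).1]
  have hJ_vol : volume.real J ≤ 1 / (2 * γ) :=
    (measureReal_le_setIntegral_div hJ hf_int (by positivity) hf_lb).trans (by gcongr)
  have h_const_int : IntegrableOn (fun _ => γ⁻¹) J :=
    integrableOn_const (hf_int.measure_lt_top_of_le (by positivity) hf_lb).ne
  have h_bound_int : IntegrableOn (fun x => M * (γ⁻¹ + g x + f x / γ)) J :=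
    ((h_const_int.add hg_int).add (hf_int.div_const γ)).const_mul M
  have h_mul_log {h : (Fin d → ℝ) → ℝ} (hh : IntegrableOn h J) :
      AEStronglyMeasurable (fun x => h x * Real.log (h x)) (volume.restrict J) :=
    (hh.aemeasurable.mul hh.aemeasurable.log).aestronglyMeasurable
  calc |(∫ x in J, g x * Real.log (g x)) - ∫ x in J, f x * Real.log (f x)|
      ≤ ∫ x in J, M * (γ⁻¹ + g x + f x / γ) := by
        refine abs_integral_sub_integral_le_of_abs_sub_le (h_mul_log hg_int) (h_mul_log hf_int)
          h_bound_int ((ae_restrict_mem hJ).mono fun x hx => ?_)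
        exact Real.abs_mul_log_sub_mul_log_le hγ (hf_ge x hx) (hg_ge x hx) (hM x hx)
    _ = M * (volume.real J * γ⁻¹ + (∫ x in J, g x) + (∫ x in J, f x) / γ) := by
        rw [integral_const_mul,
          integral_add (f := fun x => γ⁻¹ + g x) (h_const_int.add hg_int) (hf_int.div_const γ),
          integral_add h_const_int hg_int, setIntegral_const, integral_div, smul_eq_mul]
    _ ≤ M * (1 / (2 * γ) * γ⁻¹ + 1 + 1 / γ) := by gcongr
    _ ≤ (2 / γ + 1 / γ ^ 2 + 1) * M := by
        rw [mul_comm]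
        refine mul_le_mul_of_nonneg_right ?_ hM₀
        field_simp
        nlinarith

/-- Deterministic comparison used in the proof of Theorem 2: if `f ≥ 2γ` on a
measurable set `J`, `∫_J f ≤ 1`, `∫_J g ≤ 1`, and `sup_{x∈J} |g − f| ≤ γ`, then
`|∫_J g log g − ∫_J f log f| ≤ (2/γ + 1/γ² + 1) · sup_{x∈J} |g(x) − f(x)|`. -/
theorem statement8 (d : ℕ) (J : Set (Fin d → ℝ)) (hJ : MeasurableSet J)
    (γ : ℝ) (hγ : 0 < γ)
    (f g : (Fin d → ℝ) → ℝ)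
    (hf_meas : Measurable f) (hg_meas : Measurable g)
    (hf_nonneg : ∀ x, 0 ≤ f x) (hg_nonneg : ∀ x, 0 ≤ g x)
    (hf_int : IntegrableOn f J) (hg_int : IntegrableOn g J)
    (hf_le : ∫ x in J, f x ≤ 1) (hg_le : ∫ x in J, g x ≤ 1)
    (hf_lb : ∀ x ∈ J, 2 * γ ≤ f x)
    (h_close : ∀ x ∈ J, |g x - f x| ≤ γ) :
    |(∫ x in J, g x * Real.log (g x)) - ∫ x in J, f x * Real.log (f x)|
      ≤ (2 / γ + 1 / γ ^ 2 + 1) * ⨆ x : J, |g x - f x| :=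
  statement8_general d J hJ γ hγ f g hf_int hg_int hf_le hg_le hf_lb h_close
end
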